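/- With the same setup, the maximal subspace W is invariant under Ad(g) for every g in the reachable set R. -/

import Mathlib

open Manifold Pointwise

/-- Reachable sets from the identity of the discrete-time linear system
`g_{k+1} = F(u_k) · ψ(g_k)`: `R_0 = {1}` and `R_{k+1} = R_1 · ψ(R_k)`. -/
def Rset {G : Type*} [Group G] {α : Type*} (U : Set α) (F : α → G) (ψ : G → G) :
    ℕ → Set G
  | 0 => {1}
  | k + 1 => (F '' U) * (ψ '' Rset U F ψ k)

noncomputable def Lproj (d : ℕ) : (Fin (d + d) → ℝ) →L[ℝ] (Fin d → ℝ) :=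
  ContinuousLinearMap.pi fun i => ContinuousLinearMap.proj (Fin.castAdd d i)

noncomputable def Mproj (d : ℕ) : (Fin (d + d) → ℝ) →L[ℝ] (Fin d → ℝ) :=
  ContinuousLinearMap.pi fun i => ContinuousLinearMap.proj (Fin.natAdd d i)

lemma Lproj_append {d : ℕ} (u w : Fin d → ℝ) : Lproj d (Fin.append u w) = u := by
  funext i; simp [Lproj, Fin.append_left]

lemma Mproj_append {d : ℕ} (u w : Fin d → ℝ) : Mproj d (Fin.append u w) = w := by
  funext i
  simp only [Mproj, ContinuousLinearMap.pi_apply, ContinuousLinearMap.proj_apply]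
  exact Fin.append_right u w i

section Aux
set_option linter.unusedSectionVars false
variable {E : Type*} [NormedAddCommGroup E] [NormedSpace ℝ E]
  {H : Type*} [TopologicalSpace H] {I : ModelWithCorners ℝ E H}
  {G : Type*} [TopologicalSpace G] [ChartedSpace H G] [Group G] [LieGroup I (⊤ : ℕ∞) G]

variable (I) in
/-- The right-translated derivative `d̂c_0` as a continuous linear map. -/
noncomputable def hatCLM {d : ℕ} (c : (Fin d → ℝ) → G) : (Fin d → ℝ) →L[ℝ] E :=
  (mfderiv I I (fun h => h * (c 0)⁻¹) (c 0) : E →L[ℝ] E).comp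
    (mfderiv 𝓘(ℝ, Fin d → ℝ) I c 0 : (Fin d → ℝ) →L[ℝ] E)

variable (I) in
/-- `Ad g`. -/
noncomputable def AdCLM (g : G) : E →L[ℝ] E :=
  (mfderiv I I (fun x => g * x * g⁻¹) (1 : G) : E →L[ℝ] E)

lemma contMDiff_conj (a : G) : ContMDiff I I (⊤ : ℕ∞) (fun x : G => a * x * a⁻¹) :=
  contMDiff_mul_right.comp contMDiff_mul_left

lemma hasMFDerivAt_point_congr {x y : G} (h : x = y) {χ : G → G} {D : E →L[ℝ] E}
    (hD : HasMFDerivAt I I χ x D) : HasMFDerivAt I I χ y D := h ▸ hD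

lemma hasMFDerivAt_point_congr_vec {n : ℕ} {x y : Fin n → ℝ} (h : x = y)
    {f : (Fin n → ℝ) → G} {D : (Fin n → ℝ) →L[ℝ] E}
    (hD : HasMFDerivAt 𝓘(ℝ, Fin n → ℝ) I f x D) :
    HasMFDerivAt 𝓘(ℝ, Fin n → ℝ) I f y D := h ▸ hD

/-- `hatCLM c` is the derivative of `y ↦ c y * (c 0)⁻¹` at `0`. -/
lemma hatCLM_hasMFDerivAt {d : ℕ} {c : (Fin d → ℝ) → G}
    (hc : MDifferentiableAt 𝓘(ℝ, Fin d → ℝ) I c 0) :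
    HasMFDerivAt 𝓘(ℝ, Fin d → ℝ) I (fun y => c y * (c 0)⁻¹) 0 (hatCLM I c) :=
  ((mdifferentiableAt_mul_right).hasMFDerivAt).comp 0 hc.hasMFDerivAt

/-- The key composition lemma: if `φ x * (φ (c 0))⁻¹ = χ (x * (c 0)⁻¹)` then
`hatCLM (φ ∘ c) = dχ₁ ∘ hatCLM c`. -/
lemma hatCLM_comp {d : ℕ} {c : (Fin d → ℝ) → G}
    (hc : MDifferentiableAt 𝓘(ℝ, Fin d → ℝ) I c 0)
    {φ χ : G → G} (hφ : MDifferentiable I I φ) (hχ : MDifferentiable I I χ)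
    (hcomm : ∀ x : G, φ x * (φ (c 0))⁻¹ = χ (x * (c 0)⁻¹)) :
    hatCLM I (fun y => φ (c y)) = (mfderiv I I χ (1 : G) : E →L[ℝ] E).comp (hatCLM I c) := by
  have hχ1 : HasMFDerivAt I I χ (c 0 * (c 0)⁻¹) (mfderiv I I χ (1 : G) : E →L[ℝ] E) :=
    hasMFDerivAt_point_congr (mul_inv_cancel (c 0)).symm (hχ 1).hasMFDerivAt
  have h2 : HasMFDerivAt 𝓘(ℝ, Fin d → ℝ) I (fun y => χ (c y * (c 0)⁻¹)) 0
      ((mfderiv I I χ (1 : G) : E →L[ℝ] E).comp (hatCLM I c)) :=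
    hχ1.comp 0 (hatCLM_hasMFDerivAt hc)
  have h3 : (fun y => χ (c y * (c 0)⁻¹)) = fun y => φ (c y) * (φ (c 0))⁻¹ := by
    funext y; rw [hcomm (c y)]
  rw [h3] at h2
  have h4 : MDifferentiableAt 𝓘(ℝ, Fin d → ℝ) I (fun y => φ (c y)) 0 := (hφ (c 0)).comp 0 hc
  exact (hatCLM_hasMFDerivAt h4).mfderiv.symm.trans h2.mfderiv

/-- derivative of multiplication at `(1,1)` is addition -/
lemma hasMFDerivAt_mul_one_one :
    HasMFDerivAt (I.prod I) I (fun p : G × G => p.1 * p.2) ((1 : G), (1 : G))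
      (ContinuousLinearMap.fst ℝ E E + ContinuousLinearMap.snd ℝ E E) := by
  have hd : MDifferentiableAt (I.prod I) I (fun p : G × G => p.1 * p.2) (1, 1) :=
    ((contMDiff_mul I ((⊤ : ℕ∞) : WithTop ℕ∞) (G := G)).contMDiffAt).mdifferentiableAt (by simp)
  refine hd.hasMFDerivAt.congr_mfderiv ?_
  have := mfderiv_prod_eq_add_comp (I := I) (I' := I) (I'' := I)
    (f := fun p : G × G => p.1 * p.2) (p := ((1 : G), (1 : G))) hd
  rw [this]
  have h1 : (fun z : G => z * 1) = id := by funext z; simp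
  have h2 : (fun z : G => 1 * z) = id := by funext z; simp
  rw [h1, h2, mfderiv_id]
  ext v
  rfl

lemma hasMFDerivAt_mul_of_one {n : ℕ} {u w : (Fin n → ℝ) → G}
    {Du Dw : (Fin n → ℝ) →L[ℝ] E}
    (hu : HasMFDerivAt 𝓘(ℝ, Fin n → ℝ) I u 0 Du)
    (hw : HasMFDerivAt 𝓘(ℝ, Fin n → ℝ) I w 0 Dw)
    (hu0 : u 0 = 1) (hw0 : w 0 = 1) :
    HasMFDerivAt 𝓘(ℝ, Fin n → ℝ) I (fun v => u v * w v) 0 (Du + Dw) := by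
  have hpair : HasMFDerivAt 𝓘(ℝ, Fin n → ℝ) (I.prod I) (fun v => (u v, w v)) 0 (Du.prod Dw) := by
    refine ((hu.mdifferentiableAt.prodMk hw.mdifferentiableAt).hasMFDerivAt).congr_mfderiv ?_
    rw [hu.mdifferentiableAt.mfderiv_prod hw.mdifferentiableAt, hu.mfderiv, hw.mfderiv]
    rfl
  have hmul : HasMFDerivAt (I.prod I) I (fun p : G × G => p.1 * p.2) (u 0, w 0)
      (ContinuousLinearMap.fst ℝ E E + ContinuousLinearMap.snd ℝ E E) := by
    rw [hu0, hw0]; exact hasMFDerivAt_mul_one_one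
  have := hmul.comp 0 hpair
  refine this.congr_mfderiv ?_
  ext v
  rfl

/-- The product rule for `hatCLM`. -/
lemma hatCLM_mul {d : ℕ} {f c : (Fin d → ℝ) → G}
    (hf : ContMDiff 𝓘(ℝ, Fin d → ℝ) I (⊤ : ℕ∞) f) (hc : ContMDiff 𝓘(ℝ, Fin d → ℝ) I (⊤ : ℕ∞) c) :
    hatCLM I (fun v : Fin (d + d) → ℝ => f (Lproj d v) * c (Mproj d v)) =
      (hatCLM I f).comp (Lproj d) + ((AdCLM I (f 0)).comp (hatCLM I c)).comp (Mproj d) := by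
  have hfd : MDifferentiableAt 𝓘(ℝ, Fin d → ℝ) I f 0 := (hf 0).mdifferentiableAt (by simp)
  have hcd : MDifferentiableAt 𝓘(ℝ, Fin d → ℝ) I c 0 := (hc 0).mdifferentiableAt (by simp)
  have hL : HasMFDerivAt 𝓘(ℝ, Fin (d + d) → ℝ) 𝓘(ℝ, Fin d → ℝ) (Lproj d) 0 (Lproj d) :=
    (Lproj d).hasFDerivAt.hasMFDerivAt
  have hM : HasMFDerivAt 𝓘(ℝ, Fin (d + d) → ℝ) 𝓘(ℝ, Fin d → ℝ) (Mproj d) 0 (Mproj d) :=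
    (Mproj d).hasFDerivAt.hasMFDerivAt
  -- u-part
  have hu : HasMFDerivAt 𝓘(ℝ, Fin (d + d) → ℝ) I (fun v => f (Lproj d v) * (f 0)⁻¹) 0
      ((hatCLM I f).comp (Lproj d)) :=
    (hasMFDerivAt_point_congr_vec (map_zero (Lproj d)).symm
      (hatCLM_hasMFDerivAt hfd)).comp 0 hL
  -- w-part
  have hinner : HasMFDerivAt 𝓘(ℝ, Fin (d + d) → ℝ) I (fun v => c (Mproj d v) * (c 0)⁻¹) 0
      ((hatCLM I c).comp (Mproj d)) :=
    (hasMFDerivAt_point_congr_vec (map_zero (Mproj d)).symm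
      (hatCLM_hasMFDerivAt hcd)).comp 0 hM
  have h1GH : (1 : G) = c (Mproj d 0) * (c 0)⁻¹ := by rw [map_zero, mul_inv_cancel]
  have hconj : HasMFDerivAt I I (fun x : G => f 0 * x * (f 0)⁻¹)
      (c (Mproj d 0) * (c 0)⁻¹) (AdCLM (E := E) I (f 0)) :=
    hasMFDerivAt_point_congr h1GH
      (((contMDiff_conj (f 0) 1).mdifferentiableAt (by simp)).hasMFDerivAt)
  have hw : HasMFDerivAt 𝓘(ℝ, Fin (d + d) → ℝ) I
      (fun v => f 0 * (c (Mproj d v) * (c 0)⁻¹) * (f 0)⁻¹) 0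
      ((AdCLM (E := E) I (f 0)).comp ((hatCLM I c).comp (Mproj d))) :=
    hconj.comp 0 hinner
  have hu0 : f (Lproj d 0) * (f 0)⁻¹ = 1 := by rw [map_zero, mul_inv_cancel]
  have hw0 : f 0 * (c (Mproj d 0) * (c 0)⁻¹) * (f 0)⁻¹ = 1 := by
    rw [map_zero, mul_inv_cancel, mul_one, mul_inv_cancel]
  have hprod := hasMFDerivAt_mul_of_one hu hw hu0 hw0
  have hfun : (fun v => (f (Lproj d v) * (f 0)⁻¹) *
        (f 0 * (c (Mproj d v) * (c 0)⁻¹) * (f 0)⁻¹)) =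
      (fun v : Fin (d + d) → ℝ => f (Lproj d v) * c (Mproj d v) *
        (f (Lproj d 0) * c (Mproj d 0))⁻¹) := by
    funext v
    rw [map_zero, map_zero]
    group
  rw [hfun] at hprod
  have hF1 : MDifferentiableAt 𝓘(ℝ, Fin (d + d) → ℝ) I
      (fun v : Fin (d + d) → ℝ => f (Lproj d v) * c (Mproj d v)) 0 := by
    have h1 : ContMDiff 𝓘(ℝ, Fin (d + d) → ℝ) I (⊤ : ℕ∞)
        (fun v : Fin (d + d) → ℝ => f (Lproj d v) * c (Mproj d v)) :=
      (hf.comp (Lproj d).contMDiff).mul (hc.comp (Mproj d).contMDiff)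
    exact (h1 0).mdifferentiableAt (by simp)
  exact (hatCLM_hasMFDerivAt hF1).mfderiv.symm.trans hprod.mfderiv

end Aux
section Aux5
set_option linter.unusedSectionVars false
variable {E : Type*} [NormedAddCommGroup E] [NormedSpace ℝ E]
  {H : Type*} [TopologicalSpace H] {I : ModelWithCorners ℝ E H}
  {G : Type*} [TopologicalSpace G] [ChartedSpace H G] [Group G] [LieGroup I (⊤ : ℕ∞) G]

lemma one_mem_Rset {m : ℕ} {U : Set (Fin m → ℝ)} {F : (Fin m → ℝ) → G} (ψ : G ≃* G)
    (hU0 : (0 : Fin m → ℝ) ∈ U) (hF0 : F 0 = 1) : ∀ p, (1 : G) ∈ Rset U F ⇑ψ p := by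
  intro p
  induction p with
  | zero => exact rfl
  | succ p ih =>
    have : (1 : G) = F 0 * ψ 1 := by rw [hF0, map_one, mul_one]
    rw [Rset, this]
    exact Set.mul_mem_mul ⟨0, hU0, rfl⟩ ⟨1, ih, rfl⟩

lemma mul_mem_Rset {m : ℕ} {U : Set (Fin m → ℝ)} {F : (Fin m → ℝ) → G} (ψ : G ≃* G)
    {a b : G} {p q : ℕ} (ha : a ∈ Rset U F ⇑ψ p) (hb : b ∈ Rset U F ⇑ψ q) :
    a * (⇑ψ)^[p] b ∈ Rset U F ⇑ψ (p + q) := by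
  induction p generalizing a with
  | zero =>
    have : a = 1 := ha
    simpa [this] using hb
  | succ p ih =>
    rcases ha with ⟨x, hx, y, hy, rfl⟩
    rcases hy with ⟨a', ha', rfl⟩
    have h1 : x * ψ a' * (⇑ψ)^[p + 1] b = x * ψ (a' * (⇑ψ)^[p] b) := by
      rw [Function.iterate_succ_apply', map_mul, mul_assoc]
    rw [h1, show p + 1 + q = p + q + 1 from Nat.succ_add p q]
    exact Set.mul_mem_mul hx ⟨a' * (⇑ψ)^[p] b, ih ha', rfl⟩

lemma contMDiff_iterate {χ : G → G} (hχ : ContMDiff I I (⊤ : ℕ∞) χ) (n : ℕ) :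
    ContMDiff I I (⊤ : ℕ∞) χ^[n] := by
  induction n with
  | zero => exact contMDiff_id
  | succ n ih => rw [Function.iterate_succ]; exact ih.comp hχ

/-- If `χ` has a smooth left inverse fixing `1`, then `d χ₁` is injective. -/
lemma mfderiv_one_injective {χ χ' : G → G}
    (hχ : MDifferentiable I I χ) (hχ' : MDifferentiable I I χ')
    (hinv : ∀ x, χ' (χ x) = x) (hχone : χ 1 = 1) :
    Function.Injective (mfderiv I I χ (1 : G) : E →L[ℝ] E) := by
  have h1 : HasMFDerivAt I I χ (1 : G) (mfderiv I I χ (1 : G) : E →L[ℝ] E) :=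
    (hχ 1).hasMFDerivAt
  have h2 : HasMFDerivAt I I χ' (χ 1) (mfderiv I I χ' (1 : G) : E →L[ℝ] E) :=
    hasMFDerivAt_point_congr hχone.symm (hχ' 1).hasMFDerivAt
  have h3 : HasMFDerivAt I I (χ' ∘ χ) (1 : G)
      ((mfderiv I I χ' (1 : G) : E →L[ℝ] E).comp
        (mfderiv I I χ (1 : G) : E →L[ℝ] E)) := h2.comp 1 h1
  have h4 : (χ' ∘ χ) = id := funext fun x => hinv x
  rw [h4] at h3
  have h5 := h3.mfderiv
  rw [mfderiv_id] at h5
  have key : ∀ z : E, (mfderiv I I χ' (1 : G) : E →L[ℝ] E)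
      ((mfderiv I I χ (1 : G) : E →L[ℝ] E) z) = z := by
    intro z
    have := congrArg (fun T : E →L[ℝ] E => T z) h5.symm
    exact this
  intro x y hxy
  have h6 := congrArg (⇑(mfderiv I I χ' (1 : G) : E →L[ℝ] E)) hxy
  rwa [key x, key y] at h6

lemma span_range_clm_comp {n : ℕ} (T : E →L[ℝ] E) (S : (Fin n → ℝ) →L[ℝ] E) :
    Submodule.span ℝ (Set.range ⇑(T.comp S)) =
      Submodule.map (T : E →ₗ[ℝ] E) (Submodule.span ℝ (Set.range ⇑S)) := by
  have h : Set.range ⇑(T.comp S) = ⇑T '' Set.range ⇑S := by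
    rw [ContinuousLinearMap.coe_comp']; exact Set.range_comp _ _
  rw [h]; exact Submodule.span_image (T : E →ₗ[ℝ] E)

lemma span_range_clm_sum {d : ℕ} (A B : (Fin d → ℝ) →L[ℝ] E) :
    Submodule.span ℝ (Set.range ⇑(A.comp (Lproj d) + B.comp (Mproj d))) =
      Submodule.span ℝ (Set.range ⇑A) ⊔ Submodule.span ℝ (Set.range ⇑B) := by
  apply le_antisymm
  · rw [Submodule.span_le]
    rintro _ ⟨v, rfl⟩
    have : (A.comp (Lproj d) + B.comp (Mproj d)) v = A (Lproj d v) + B (Mproj d v) := rfl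
    rw [this]
    exact Submodule.add_mem_sup (Submodule.subset_span (Set.mem_range_self _))
      (Submodule.subset_span (Set.mem_range_self _))
  · apply sup_le
    · rw [Submodule.span_le]
      rintro _ ⟨u, rfl⟩
      have : A u = (A.comp (Lproj d) + B.comp (Mproj d)) (Fin.append u 0) := by
        have h1 : (A.comp (Lproj d) + B.comp (Mproj d)) (Fin.append u 0)
            = A (Lproj d (Fin.append u 0)) + B (Mproj d (Fin.append u 0)) := rfl
        rw [h1, Lproj_append, Mproj_append, map_zero, add_zero]
      rw [this]
      exact Submodule.subset_span (Set.mem_range_self _)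
    · rw [Submodule.span_le]
      rintro _ ⟨w, rfl⟩
      have : B w = (A.comp (Lproj d) + B.comp (Mproj d)) (Fin.append 0 w) := by
        have h1 : (A.comp (Lproj d) + B.comp (Mproj d)) (Fin.append 0 w)
            = A (Lproj d (Fin.append 0 w)) + B (Mproj d (Fin.append 0 w)) := rfl
        rw [h1, Lproj_append, Mproj_append, map_zero, zero_add]
      rw [this]
      exact Submodule.subset_span (Set.mem_range_self _)

lemma map_eq_of_map_le [FiniteDimensional ℝ E] {T : E →L[ℝ] E}
    (hinj : Function.Injective ⇑T) {W : Submodule ℝ E}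
    (h : Submodule.map (T : E →ₗ[ℝ] E) W ≤ W) : Submodule.map (T : E →ₗ[ℝ] E) W = W := by
  have hfr : Module.finrank ℝ W ≤ Module.finrank ℝ (Submodule.map (T : E →ₗ[ℝ] E) W) :=
    le_of_eq (W.equivMapOfInjective (T : E →ₗ[ℝ] E) hinj).finrank_eq
  exact Submodule.eq_of_le_of_finrank_le h hfr

end Aux5

section Aux6
set_option linter.unusedSectionVars false
variable {G : Type*} [Group G]

lemma iterate_one_eq (ψ : G ≃* G) (n : ℕ) : (⇑ψ)^[n] (1 : G) = 1 :=
  Function.iterate_fixed (map_one ψ) n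

lemma iterate_hom (ψ : G ≃* G) (n : ℕ) (x y : G) :
    (⇑ψ)^[n] x * ((⇑ψ)^[n] y)⁻¹ = (⇑ψ)^[n] (x * y⁻¹) := by
  induction n with
  | zero => simp
  | succ n ih => simp only [Function.iterate_succ_apply', ← map_inv, ← map_mul, ih]

end Aux6

set_option maxHeartbeats 1000000 in
/-- In the accessibility setup, the maximal subspace `W` (the image of
`d̂f_0` for a maximizing `f ∈ ℱ`) is invariant under `Ad(g) = d(C_g)_e` for every `g`
in the reachable set `R = ⋃ k, R_k`. -/
theorem maximal_subspace_Ad_invariant {m : ℕ}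
    {E : Type*} [NormedAddCommGroup E] [NormedSpace ℝ E] [FiniteDimensional ℝ E]
    {H : Type*} [TopologicalSpace H] (I : ModelWithCorners ℝ E H)
    {G : Type*} [TopologicalSpace G] [ChartedSpace H G] [Group G] [LieGroup I (⊤ : ℕ∞) G]
    [ConnectedSpace G]
    (ψ : G ≃* G) (hψ : ContMDiff I I (⊤ : ℕ∞) ψ) (hψ' : ContMDiff I I (⊤ : ℕ∞) ψ.symm)
    (U : Set (Fin m → ℝ)) (hUopen : IsOpen U) (hUconn : IsConnected U) (hU0 : (0 : Fin m → ℝ) ∈ U)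
    (F : (Fin m → ℝ) → G) (hF : ContMDiffOn 𝓘(ℝ, Fin m → ℝ) I 1 F U)
    (hF0 : F 0 = 1)
    (k d : ℕ) (f : (Fin d → ℝ) → G) (hf : ContMDiff 𝓘(ℝ, Fin d → ℝ) I (⊤ : ℕ∞) f)
    (hfR : Set.range f ⊆ Rset U F (⇑ψ) k)
    (W : Submodule ℝ E)
    (hW : W = Submodule.span ℝ (Set.range fun y : Fin d → ℝ =>
      mfderiv I I (fun h => h * (f 0)⁻¹) (f 0)
        (mfderiv 𝓘(ℝ, Fin d → ℝ) I f 0 y)))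
    (hmax : ∀ (k' d' : ℕ) (f' : (Fin d' → ℝ) → G),
      ContMDiff 𝓘(ℝ, Fin d' → ℝ) I (⊤ : ℕ∞) f' → Set.range f' ⊆ Rset U F (⇑ψ) k' →
      Module.finrank ℝ (Submodule.span ℝ (Set.range fun y : Fin d' → ℝ =>
          mfderiv I I (fun h => h * (f' 0)⁻¹) (f' 0)
            (mfderiv 𝓘(ℝ, Fin d' → ℝ) I f' 0 y)))
        ≤ Module.finrank ℝ W) :
    ∀ g ∈ ⋃ l : ℕ, Rset U F (⇑ψ) l,
      (fun X : E => mfderiv I I (fun x => g * x * g⁻¹) (1 : G) X) '' (W : Set E)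
        = (W : Set E) := by
  have hfd : MDifferentiableAt 𝓘(ℝ, Fin d → ℝ) I f 0 := (hf 0).mdifferentiableAt (by simp)
  have hWr : W = Submodule.span ℝ (Set.range ⇑(hatCLM I f)) := hW
  have hψk : ∀ n, ContMDiff I I (⊤ : ℕ∞) (⇑ψ)^[n] := contMDiff_iterate hψ
  have hψs : ∀ n, ContMDiff I I (⊤ : ℕ∞) (⇑ψ.symm)^[n] := contMDiff_iterate hψ'
  have hΨinj : ∀ n, Function.Injective
      ⇑(mfderiv I I (⇑ψ)^[n] (1 : G) : E →L[ℝ] E) := by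
    intro n
    refine mfderiv_one_injective ((hψk n).mdifferentiable (by simp))
      ((hψs n).mdifferentiable (by simp)) ?_ (iterate_one_eq ψ n)
    exact fun x => Function.LeftInverse.iterate ψ.symm_apply_apply n x
  have hAdinj : ∀ a : G, Function.Injective ⇑(AdCLM (E := E) I a) := by
    intro a
    refine mfderiv_one_injective ((contMDiff_conj a).mdifferentiable (by simp))
      ((contMDiff_conj a⁻¹).mdifferentiable (by simp)) ?_ (by simp)
    intro x
    simp only [inv_inv]
    group
  -- The key consequence of maximality:
  have C1 : ∀ (l : ℕ) (g : G), g ∈ Rset U F ⇑ψ l →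
      Submodule.map ((AdCLM (E := E) I (f 0)) : E →ₗ[ℝ] E)
        (Submodule.map (ContinuousLinearMap.toLinearMap (R := ℝ) (S := ℝ) (σ := RingHom.id ℝ) (M := E) (M₂ := E) (mfderiv I I (⇑ψ)^[k] (1 : G)))
          (Submodule.map ((AdCLM (E := E) I g) : E →ₗ[ℝ] E)
            (Submodule.map (ContinuousLinearMap.toLinearMap (R := ℝ) (S := ℝ) (σ := RingHom.id ℝ) (M := E) (M₂ := E) (mfderiv I I (⇑ψ)^[l] (1 : G))) W))) ≤ W := by
    intro l g hgl
    have hc : ContMDiff 𝓘(ℝ, Fin d → ℝ) I (⊤ : ℕ∞)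
        (fun y => (⇑ψ)^[k] (g * (⇑ψ)^[l] (f y))) :=
      (hψk k).comp (contMDiff_mul_left.comp ((hψk l).comp hf))
    have hf₁ : ContMDiff 𝓘(ℝ, Fin (d + d) → ℝ) I (⊤ : ℕ∞)
        (fun v => f (Lproj d v) * (fun y => (⇑ψ)^[k] (g * (⇑ψ)^[l] (f y))) (Mproj d v)) :=
      (hf.comp (Lproj d).contMDiff).mul (hc.comp (Mproj d).contMDiff)
    have hf₁R : Set.range
        (fun v => f (Lproj d v) * (fun y => (⇑ψ)^[k] (g * (⇑ψ)^[l] (f y))) (Mproj d v))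
        ⊆ Rset U F (⇑ψ) (k + (l + k)) := by
      rintro _ ⟨v, rfl⟩
      exact mul_mem_Rset ψ (hfR (Set.mem_range_self _))
        (mul_mem_Rset ψ hgl (hfR (Set.mem_range_self _)))
    have hmax₁ := hmax (k + (l + k)) (d + d) _ hf₁ hf₁R
    have hsp : Module.finrank ℝ (Submodule.span ℝ (Set.range
        ⇑(hatCLM I (fun v : Fin (d + d) → ℝ =>
          f (Lproj d v) * (fun y => (⇑ψ)^[k] (g * (⇑ψ)^[l] (f y))) (Mproj d v)))))
        ≤ Module.finrank ℝ W := hmax₁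
    rw [hatCLM_mul hf hc, span_range_clm_sum] at hsp
    -- compute `hatCLM` of the second factor
    have e1 : hatCLM I (fun y => (⇑ψ)^[k] (g * (⇑ψ)^[l] (f y)))
        = ContinuousLinearMap.comp (id (mfderiv I I (⇑ψ)^[k] (1 : G)) : E →L[ℝ] E)
          (hatCLM I (fun y => g * (⇑ψ)^[l] (f y))) := by
      refine hatCLM_comp ?_ ((hψk k).mdifferentiable (by simp))
        ((hψk k).mdifferentiable (by simp)) ?_
      · exact ((contMDiff_mul_left.comp ((hψk l).comp hf)) 0).mdifferentiableAt (by simp)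
      · exact fun x => iterate_hom ψ k x _
    have e2 : hatCLM I (fun y => g * (⇑ψ)^[l] (f y))
        = (AdCLM (E := E) I g).comp (hatCLM I (fun y => (⇑ψ)^[l] (f y))) := by
      refine hatCLM_comp (φ := fun x => g * x) (χ := fun x => g * x * g⁻¹) ?_
        mdifferentiable_mul_left ((contMDiff_conj g).mdifferentiable (by simp)) ?_
      · exact (((hψk l).comp hf) 0).mdifferentiableAt (by simp)
      · intro x; group
    have e3 : hatCLM I (fun y => (⇑ψ)^[l] (f y))
        = ContinuousLinearMap.comp (id (mfderiv I I (⇑ψ)^[l] (1 : G)) : E →L[ℝ] E) (hatCLM I f) := by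
      refine hatCLM_comp hfd ((hψk l).mdifferentiable (by simp))
        ((hψk l).mdifferentiable (by simp)) ?_
      exact fun x => iterate_hom ψ l x _
    rw [e1, e2, e3] at hsp
    rw [span_range_clm_comp, span_range_clm_comp, span_range_clm_comp,
      span_range_clm_comp, ← hWr] at hsp
    -- now `hsp : finrank (W ⊔ X) ≤ finrank W` with `X` the four-fold image
    have hle : W ≤ Submodule.span ℝ (Set.range ⇑(hatCLM I f)) ⊔
        Submodule.map ((AdCLM (E := E) I (f 0)) : E →ₗ[ℝ] E)
          (Submodule.map (ContinuousLinearMap.toLinearMap (R := ℝ) (S := ℝ) (σ := RingHom.id ℝ) (M := E) (M₂ := E) (mfderiv I I (⇑ψ)^[k] (1 : G)))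
            (Submodule.map ((AdCLM (E := E) I g) : E →ₗ[ℝ] E)
              (Submodule.map (ContinuousLinearMap.toLinearMap (R := ℝ) (S := ℝ) (σ := RingHom.id ℝ) (M := E) (M₂ := E) (mfderiv I I (⇑ψ)^[l] (1 : G))) W))) := by
      rw [← hWr]; exact le_sup_left
    have heq := Submodule.eq_of_le_of_finrank_le hle (by rw [← hWr]; exact hsp)
    calc Submodule.map ((AdCLM (E := E) I (f 0)) : E →ₗ[ℝ] E)
          (Submodule.map (ContinuousLinearMap.toLinearMap (R := ℝ) (S := ℝ) (σ := RingHom.id ℝ) (M := E) (M₂ := E) (mfderiv I I (⇑ψ)^[k] (1 : G)))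
            (Submodule.map ((AdCLM (E := E) I g) : E →ₗ[ℝ] E)
              (Submodule.map (ContinuousLinearMap.toLinearMap (R := ℝ) (S := ℝ) (σ := RingHom.id ℝ) (M := E) (M₂ := E) (mfderiv I I (⇑ψ)^[l] (1 : G))) W)))
        ≤ Submodule.span ℝ (Set.range ⇑(hatCLM I f)) ⊔
          Submodule.map ((AdCLM (E := E) I (f 0)) : E →ₗ[ℝ] E)
            (Submodule.map (ContinuousLinearMap.toLinearMap (R := ℝ) (S := ℝ) (σ := RingHom.id ℝ) (M := E) (M₂ := E) (mfderiv I I (⇑ψ)^[k] (1 : G)))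
              (Submodule.map ((AdCLM (E := E) I g) : E →ₗ[ℝ] E)
                (Submodule.map (ContinuousLinearMap.toLinearMap (R := ℝ) (S := ℝ) (σ := RingHom.id ℝ) (M := E) (M₂ := E) (mfderiv I I (⇑ψ)^[l] (1 : G))) W))) :=
        le_sup_right
      _ = W := heq.symm
  -- `Ad 1` and `Ψ⁰` are the identity
  have hAd1 : AdCLM (E := E) I (1 : G) = ContinuousLinearMap.id ℝ E := by
    have hfun : (fun x : G => 1 * x * (1 : G)⁻¹) = id := by funext x; simp
    show (mfderiv I I (fun x : G => 1 * x * (1 : G)⁻¹) (1 : G) : E →L[ℝ] E)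
      = ContinuousLinearMap.id ℝ E
    rw [hfun, mfderiv_id]
    rfl
  have hΨ0 : (mfderiv I I (⇑ψ)^[0] (1 : G) : E →L[ℝ] E) = ContinuousLinearMap.id ℝ E := by
    rw [show (⇑ψ)^[0] = (id : G → G) from Function.iterate_zero _, mfderiv_id]
    rfl
  have map_clm_id : ∀ V : Submodule ℝ E, Submodule.map ((ContinuousLinearMap.id ℝ E) : E →ₗ[ℝ] E) V = V := by
    intro V; ext x; simp [Submodule.mem_map]
  -- finrank is preserved by injective maps
  have finrank_map_eq : ∀ (T : E →L[ℝ] E), Function.Injective ⇑T → ∀ (V : Submodule ℝ E),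
      Module.finrank ℝ (Submodule.map (T : E →ₗ[ℝ] E) V) = Module.finrank ℝ V :=
    fun T hT V => ((V.equivMapOfInjective (T : E →ₗ[ℝ] E) hT).finrank_eq).symm
  -- `Ad (f 0) ∘ Ψᵏ` preserves `W`
  have hT0 := C1 0 1 (one_mem_Rset ψ hU0 hF0 0)
  rw [hAd1, hΨ0, map_clm_id, map_clm_id] at hT0
  have hTeq : Submodule.map ((AdCLM (E := E) I (f 0)) : E →ₗ[ℝ] E)
      (Submodule.map (ContinuousLinearMap.toLinearMap (R := ℝ) (S := ℝ) (σ := RingHom.id ℝ) (M := E) (M₂ := E) (mfderiv I I (⇑ψ)^[k] (1 : G))) W) = W := by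
    refine Submodule.eq_of_le_of_finrank_le hT0 ?_
    rw [finrank_map_eq _ (hAdinj (f 0)), finrank_map_eq _ (hΨinj k)]
  -- strip the invertible prefix
  have C2 : ∀ (l : ℕ) (g : G), g ∈ Rset U F ⇑ψ l →
      Submodule.map ((AdCLM (E := E) I g) : E →ₗ[ℝ] E)
        (Submodule.map (ContinuousLinearMap.toLinearMap (R := ℝ) (S := ℝ) (σ := RingHom.id ℝ) (M := E) (M₂ := E) (mfderiv I I (⇑ψ)^[l] (1 : G))) W) ≤ W := by
    intro l g hgl
    have h := (C1 l g hgl).trans_eq hTeq.symm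
    have h2 := (Submodule.map_le_map_iff_of_injective (hAdinj (f 0)) _ _).mp h
    exact (Submodule.map_le_map_iff_of_injective (hΨinj k) _ _).mp h2
  -- `Ψˡ` preserves `W`
  have hΨW : ∀ l : ℕ, Submodule.map (ContinuousLinearMap.toLinearMap (R := ℝ) (S := ℝ) (σ := RingHom.id ℝ) (M := E) (M₂ := E) (mfderiv I I (⇑ψ)^[l] (1 : G))) W = W := by
    intro l
    have h := C2 l 1 (one_mem_Rset ψ hU0 hF0 l)
    rw [hAd1, map_clm_id] at h
    exact map_eq_of_map_le (E := E) (hΨinj l) h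
  -- conclusion
  intro g hg
  obtain ⟨_, ⟨l, rfl⟩, hgl⟩ := hg
  have h := C2 l g hgl
  rw [hΨW l] at h
  have hAdW : Submodule.map ((AdCLM (E := E) I g) : E →ₗ[ℝ] E) W = W :=
    map_eq_of_map_le (E := E) (hAdinj g) h
  have hset : ⇑(AdCLM (E := E) I g) '' (W : Set E) = (W : Set E) := by
    have := Submodule.map_coe ((AdCLM (E := E) I g) : E →ₗ[ℝ] E) W
    rw [hAdW] at this
    exact this.symm
  exact hset
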